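/- arXiv:1908.02471 — 2 statements merged into one kernel-verified Lean document; each statement's English description precedes it below -/
import Mathlib

section
/- The field of real numbers is not a finite-dimensional vector space over any proper subfield: if P is a subfield of ℝ with P ≠ ℝ, then ℝ is infinite-dimensional as a vector space over P. -/
/-!
Artin–Schreier: an algebraically closed field `K` of characteristic zero has degree at most `2`
over every subfield `F` over which it is finite. Put `E = F(i)`. If `[K : E] > 1`, Galois theory
gives an intermediate field `M ⊇ E` with `[K : M] = q` prime; `M` contains the `q`-th roots of
unity, so by Kummer theory some `a ∈ M` is not a `q`-th power. For odd `q`, `X ^ (q ^ 2) - a` is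
then irreducible over `M`, which is impossible in an extension of degree `q`. For `q = 2`, write
`√a = α` and a square root of `α` as `x + y α`; then `x ^ 2 + a y ^ 2 = 0` and `2 x y = 1`, so
`a = (i x / y) ^ 2` after all. Hence `[K : F] = [E : F] ≤ 2`, and for `P ⊆ ℝ ⊆ ℂ` this reads
`2 [ℝ : P] ≤ 2`.
-/

open Module Polynomial IntermediateField

namespace IsGalois

variable {F K : Type*} [Field F] [Field K] [Algebra F K] [FiniteDimensional F K] [IsGalois F K]

theorem exists_intermediateField_finrank_eq_of_prime_dvd {q : ℕ} (hq : q.Prime)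
    (hdvd : q ∣ finrank F K) : ∃ M : IntermediateField F K, finrank M K = q := by
  have := Fact.mk hq
  obtain ⟨σ, hσ⟩ := exists_prime_orderOf_dvd_card' q (card_aut_eq_finrank F K ▸ hdvd)
  refine ⟨fixedField (Subgroup.zpowers σ), ?_⟩
  rw [finrank_fixedField_eq_card, Nat.card_zpowers, hσ]

theorem exists_not_pow_eq_of_finrank_eq_prime {q : ℕ} (hq : q.Prime) (h : finrank F K = q)
    {ζ : F} (hζ : IsPrimitiveRoot ζ q) : ∃ a : F, ∀ b : F, b ^ q ≠ a := by
  have := Fact.mk hq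
  have : IsCyclic Gal(K/F) := isCyclic_of_prime_card (h ▸ card_aut_eq_finrank F K)
  obtain ⟨α, ⟨a, ha⟩, hα⟩ := exists_root_adjoin_eq_top_of_isCyclic F K
    ⟨ζ, (mem_primitiveRoots finrank_pos).mpr (h ▸ hζ)⟩
  exact ⟨a, pow_ne_of_irreducible_X_pow_sub_C
    (h ▸ irreducible_X_pow_sub_C_of_root_adjoin_eq_top ha.symm hα) dvd_rfl hq.ne_one⟩

end IsGalois

namespace IsAlgClosed

variable {F K : Type*} [Field F] [Field K] [Algebra F K] [IsAlgClosed K] [CharZero K]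
  [FiniteDimensional F K]

theorem isGalois_of_finiteDimensional : IsGalois F K := by
  have : CharZero F := (algebraMap F K).charZero
  have : Algebra.IsAlgebraic F K := Algebra.IsAlgebraic.of_finite F K
  have : IsAlgClosure F K := ⟨‹_›, ‹_›⟩
  exact ⟨⟩

theorem exists_isPrimitiveRoot_of_finrank_eq_prime {q : ℕ} (hq : q.Prime)
    (h : finrank F K = q) : ∃ ζ : F, IsPrimitiveRoot ζ q := by
  have : NeZero q := ⟨hq.ne_zero⟩
  have : NeZero (q : K) := ⟨Nat.cast_ne_zero.mpr hq.ne_zero⟩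
  obtain ⟨z, hz⟩ := HasEnoughRootsOfUnity.exists_primitiveRoot K q
  have hdeg_lt : finrank F F⟮z⟯ < q := by
    rw [adjoin.finrank (Algebra.IsIntegral.isIntegral z)]
    calc (minpoly F z).natDegree ≤ (cyclotomic q F).natDegree :=
          natDegree_le_of_dvd (minpoly.dvd F z (by
            rw [aeval_def, ← eval_map, map_cyclotomic, ← IsRoot.def, isRoot_cyclotomic_iff]
            exact hz)) (cyclotomic_ne_zero q F)
      _ = q.totient := natDegree_cyclotomic q F
      _ < q := Nat.totient_lt q hq.one_lt
  have hdeg_dvd : finrank F F⟮z⟯ ∣ q := h ▸ Dvd.intro _ (finrank_mul_finrank F F⟮z⟯ K)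
  have hz_mem : z ∈ (⊥ : IntermediateField F K) := by
    rw [← adjoin_simple_eq_bot_iff, ← IntermediateField.finrank_eq_one_iff]
    exact ((Nat.dvd_prime hq).mp hdeg_dvd).resolve_right hdeg_lt.ne
  obtain ⟨ζ, rfl⟩ := mem_bot.mp hz_mem
  exact ⟨ζ, hz.of_map_of_injective (algebraMap F K).injective⟩

theorem finrank_ne_of_prime_of_ne_two {q : ℕ} (hq : q.Prime) (hq2 : q ≠ 2) :
    finrank F K ≠ q := by
  intro h
  have := isGalois_of_finiteDimensional (F := F) (K := K)
  obtain ⟨ζ, hζ⟩ := exists_isPrimitiveRoot_of_finrank_eq_prime hq h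
  obtain ⟨a, ha⟩ := IsGalois.exists_not_pow_eq_of_finrank_eq_prime hq h hζ
  obtain ⟨β, hβ⟩ := exists_pow_nat_eq (algebraMap F K a) (pow_pos hq.pos 2)
  have hminpoly : minpoly F β = X ^ q ^ 2 - C a :=
    (minpoly.eq_of_irreducible_of_monic (X_pow_sub_C_irreducible_of_prime_pow hq hq2 2 ha)
      (by simp [hβ]) (monic_X_pow_sub_C a (pow_pos hq.pos 2).ne')).symm
  have hdeg : finrank F F⟮β⟯ = q ^ 2 := by
    rw [adjoin.finrank (Algebra.IsIntegral.isIntegral β), hminpoly, natDegree_X_pow_sub_C]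
  have : q ^ 2 ∣ q := hdeg ▸ h ▸ Dvd.intro _ (finrank_mul_finrank F F⟮β⟯ K)
  nlinarith [Nat.le_of_dvd hq.pos this, hq.two_le]

theorem finrank_ne_two_of_isSquare_neg_one (hi : IsSquare (-1 : F)) : finrank F K ≠ 2 := by
  intro h
  have := isGalois_of_finiteDimensional (F := F) (K := K)
  have : CharZero F := (algebraMap F K).charZero
  obtain ⟨a, ha⟩ := IsGalois.exists_not_pow_eq_of_finrank_eq_prime Nat.prime_two h
    (IsPrimitiveRoot.neg_one 0 two_ne_zero.symm)
  obtain ⟨α, hα⟩ := exists_pow_nat_eq (algebraMap F K a) two_pos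
  obtain ⟨β, hβ⟩ := exists_pow_nat_eq α two_pos
  have hindep : LinearIndependent F ![1, α] := by
    refine (LinearIndependent.pair_iff' one_ne_zero).mpr fun c hc => ha c ?_
    apply (algebraMap F K).injective
    rw [map_pow, Algebra.algebraMap_eq_smul_one, hc, hα]
  have hspan : Submodule.span F {1, α} = ⊤ := by
    simpa [Matrix.range_cons, Set.pair_comm] using
      hindep.span_eq_top_of_card_eq_finrank' (by simp [h])
  obtain ⟨x, y, rfl⟩ : ∃ x y : F, x • 1 + y • α = β :=
    Submodule.mem_span_pair.mp (hspan ▸ Submodule.mem_top)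
  obtain ⟨hx, hy⟩ : x ^ 2 + y ^ 2 * a = 0 ∧ 2 * x * y - 1 = 0 := by
    refine LinearIndependent.pair_iff.mp hindep _ _ ?_
    simp only [Algebra.smul_def, map_add, map_mul, map_pow, map_sub, map_ofNat, map_one, mul_one,
      ← hα] at hβ ⊢
    linear_combination hβ
  obtain ⟨j, hj⟩ := hi
  have hy0 : y ≠ 0 := by rintro rfl; simp at hy
  exact ha (j * x / y) (by field_simp; linear_combination (-x ^ 2) * hj - hx)

theorem finrank_le_two : finrank F K ≤ 2 := by
  obtain ⟨i, hi⟩ := exists_pow_nat_eq (-1 : K) two_pos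
  have hFi : finrank F F⟮i⟯ ≤ 2 := by
    rw [adjoin.finrank (Algebra.IsIntegral.isIntegral i)]
    calc (minpoly F i).natDegree ≤ (X ^ 2 + 1 : F[X]).natDegree :=
          natDegree_le_of_dvd (minpoly.dvd F i (by simp [hi]))
            (monic_X_pow_add_C (1 : F) two_ne_zero).ne_zero
      _ = 2 := by compute_degree!
  have hiK : finrank F⟮i⟯ K = 1 := by
    by_contra hne
    obtain ⟨q, hq, hdvd⟩ := Nat.exists_prime_and_dvd hne
    have := isGalois_of_finiteDimensional (F := F⟮i⟯) (K := K)
    obtain ⟨M, hM⟩ := IsGalois.exists_intermediateField_finrank_eq_of_prime_dvd hq hdvd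
    rcases eq_or_ne q 2 with rfl | hq2
    · have hiM : i ∈ M := M.algebraMap_mem ⟨i, mem_adjoin_simple_self F i⟩
      refine finrank_ne_two_of_isSquare_neg_one ⟨⟨i, hiM⟩, ?_⟩ hM
      ext
      simp [← hi, sq]
    · exact finrank_ne_of_prime_of_ne_two hq hq2 hM
  calc finrank F K = finrank F F⟮i⟯ * finrank F⟮i⟯ K := (finrank_mul_finrank F F⟮i⟯ K).symm
    _ ≤ 2 := by rw [hiK, mul_one]; exact hFi

end IsAlgClosed

/-- The field of real numbers is not a finite-dimensional vector space over any
proper subfield: there is no finite spanning set of `ℝ` over `P`. -/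
theorem real_infinite_dimensional_over_proper_subfield
    (P : Subfield ℝ) (hP : P ≠ ⊤) :
    ¬ ∃ s : Finset ℝ, Submodule.span P (s : Set ℝ) = ⊤ := by
  rintro ⟨s, hs⟩
  have : FiniteDimensional P ℝ := ⟨⟨s, hs⟩⟩
  have : IsScalarTower P ℝ ℂ := IsScalarTower.of_algebraMap_eq fun _ => rfl
  have : FiniteDimensional P ℂ := FiniteDimensional.trans P ℝ ℂ
  have hℂ : finrank P ℝ * 2 = finrank P ℂ := by
    rw [← Complex.finrank_real_complex, finrank_mul_finrank]
  have hle : finrank P ℂ ≤ 2 := IsAlgClosed.finrank_le_two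
  have hpos : 0 < finrank P ℝ := finrank_pos
  exact hP <| top_le_iff.mp <| Subfield.relfinrank_eq_one_iff.mp <|
    P.relfinrank_top_right.trans (by omega)
end

section
/- Let P be a proper subfield of ℝ and let X₁, X₂ be P-linear subspaces with ℝ = X₁ ⊕ X₂, both nonzero and proper. Then the projection p₁ : ℝ → X₁ corresponding to this decomposition, viewed as an additive map ℝ → ℝ, is not order bounded, i.e., p₁ does not map some bounded interval of ℝ into a bounded set. -/
/-! An additive map on `ℝ` that is bounded near `0` is continuous, hence `ℝ`-linear. If `p₁`
were order bounded it would therefore be multiplication by `p₁ 1`, which cannot both fix a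
nonzero element of `X₁` and kill a nonzero element of `X₂`. -/

open Set Bornology Topology

theorem AddMonoidHom.eq_smul_map_one_of_isBounded_image_nhds_zero {F : Type*}
    [NormedAddCommGroup F] [NormedSpace ℝ F] (f : ℝ →+ F) {s : Set ℝ}
    (hs : s ∈ 𝓝 0) (hf : IsBounded (f '' s)) (x : ℝ) : f x = x • f 1 := by
  simpa using map_real_smul f (f.continuous_of_isBounded_nhds_zero hs hf) x 1

theorem projection_not_order_bounded_general
    (P : Subfield ℝ)
    (X₁ X₂ : Submodule P ℝ)
    (h₁ : X₁ ≠ ⊥) (h₂ : X₂ ≠ ⊥)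
    (p₁ : ℝ →ₗ[P] ℝ)
    (hp₁ : ∀ x ∈ X₁, p₁ x = x) (hp₂ : ∀ x ∈ X₂, p₁ x = 0) :
    ¬ ∀ a b : ℝ, ∃ M : ℝ, ∀ x ∈ Set.Icc a b, |p₁ x| ≤ M := by
  intro hbdd
  obtain ⟨M, hM⟩ := hbdd (-1) 1
  have hlin : ∀ x, p₁ x = x * p₁ 1 :=
    p₁.toAddMonoidHom.eq_smul_map_one_of_isBounded_image_nhds_zero
      (Icc_mem_nhds (by norm_num) (by norm_num))
      (isBounded_iff_forall_norm_le.2 ⟨M, forall_mem_image.2 hM⟩)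
  obtain ⟨x₁, hx₁, hx₁0⟩ := Submodule.exists_mem_ne_zero_of_ne_bot h₁
  obtain ⟨x₂, hx₂, hx₂0⟩ := Submodule.exists_mem_ne_zero_of_ne_bot h₂
  have hone : p₁ 1 = 1 := (mul_eq_left₀ hx₁0).1 ((hlin x₁).symm.trans (hp₁ x₁ hx₁))
  have hzero : p₁ 1 = 0 := by simpa [hp₂ x₂ hx₂, hx₂0] using hlin x₂
  exact one_ne_zero (hone.symm.trans hzero)

/-- If `ℝ = X₁ ⊕ X₂` as `P`-vector spaces with both summands nonzero and proper,
then the projection onto `X₁` along `X₂` is not order bounded: it fails to map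
some bounded interval of `ℝ` into a bounded set. -/
theorem projection_not_order_bounded
    (P : Subfield ℝ) (hP : P ≠ ⊤)
    (X₁ X₂ : Submodule P ℝ) (hcompl : IsCompl X₁ X₂)
    (h₁ : X₁ ≠ ⊥) (h₁' : X₁ ≠ ⊤) (h₂ : X₂ ≠ ⊥) (h₂' : X₂ ≠ ⊤)
    (p₁ : ℝ →ₗ[P] ℝ)
    (hp₁ : ∀ x ∈ X₁, p₁ x = x) (hp₂ : ∀ x ∈ X₂, p₁ x = 0) :
    ¬ ∀ a b : ℝ, ∃ M : ℝ, ∀ x ∈ Set.Icc a b, |p₁ x| ≤ M :=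
  projection_not_order_bounded_general P X₁ X₂ h₁ h₂ p₁ hp₁ hp₂
end
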